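/- arXiv:2309.05755 — 3 statements merged into one kernel-verified Lean document; each statement's English description precedes it below -/
import Mathlib

section
/- Let K be a finite-dimensional semisimple Hopf algebra with Haar integral λ. The map π: K^{⊗3} → K^{⊗2}, a⊗b⊗c ↦ a_{(2)}b ⊗ a_{(1)}c, and the map ι: K^{⊗2} → K^{⊗3}, b⊗c ↦ S(λ_{(1)}) ⊗ λ_{(3)}b ⊗ λ_{(2)}c, satisfy π ∘ ι = id on K^{⊗2}. -/
open TensorProduct LinearMap Coalgebra

section Aux

variable {k K : Type} [Field k] [Ring K] [HopfAlgebra k K]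

/-- The trilinear helper map `x ⊗ (z ⊗ y) ↦ (b⊗c)-twisted τ(Δ(S x) * (z ⊗ y))`. -/
noncomputable def auxT (k K : Type) [Field k] [Ring K] [HopfAlgebra k K] (b c : K) :
    K ⊗[k] (K ⊗[k] K) →ₗ[k] K ⊗[k] K :=
  (TensorProduct.map (LinearMap.mulRight k b) (LinearMap.mulRight k c)) ∘ₗ
    (TensorProduct.comm k K K).toLinearMap ∘ₗ
      TensorProduct.lift ((LinearMap.mul k (K ⊗[k] K)) ∘ₗ
        Coalgebra.comul (R := k) ∘ₗ HopfAlgebra.antipode (R := k))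

lemma auxT_apply (b c x : K) (w : K ⊗[k] K) :
    auxT k K b c (x ⊗ₜ w) =
      (TensorProduct.map (LinearMap.mulRight k b) (LinearMap.mulRight k c))
        ((TensorProduct.comm k K K)
          (Coalgebra.comul (R := k) (HopfAlgebra.antipode (R := k) x) * w)) := by
  simp [auxT]

lemma auxT_tmul (b c x z y : K) :
    auxT k K b c (x ⊗ₜ (z ⊗ₜ y)) =
      TensorProduct.map (LinearMap.mulRight k (y * b)) (LinearMap.mulRight k (z * c))
        (TensorProduct.comm k K K
          (Coalgebra.comul (R := k) (HopfAlgebra.antipode (R := k) x))) := by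
  rw [auxT_apply]
  induction (Coalgebra.comul (R := k) (HopfAlgebra.antipode (R := k) x)) using
    TensorProduct.induction_on with
  | zero => simp
  | tmul u v => simp [Algebra.TensorProduct.tmul_mul_tmul, mul_assoc]
  | add p q hp hq => simp [add_mul, map_add, hp, hq]

end Aux

/-- For a finite-dimensional semisimple Hopf algebra `K` with Haar integral
`λ`, the maps `π(a⊗b⊗c) = a₍₂₎b ⊗ a₍₁₎c` and
`ι(b⊗c) = S(λ₍₁₎) ⊗ λ₍₃₎b ⊗ λ₍₂₎c` satisfy `π ∘ ι = id` on `K ⊗ K`. -/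
theorem hopf_pi_iota_splitting
    (k K : Type) [Field k] [IsAlgClosed k] [CharZero k]
    [Ring K] [HopfAlgebra k K] [FiniteDimensional k K] [IsSemisimpleRing K]
    (lam : K)
    (hl : ∀ h : K, h * lam = Coalgebra.counit (R := k) h • lam)
    (hr : ∀ h : K, lam * h = Coalgebra.counit (R := k) h • lam)
    (hn : Coalgebra.counit (R := k) lam = 1)
    (pi : K ⊗[k] (K ⊗[k] K) →ₗ[k] K ⊗[k] K)
    (io : K ⊗[k] K →ₗ[k] K ⊗[k] (K ⊗[k] K))
    (hpi : ∀ a b c : K,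
      pi (a ⊗ₜ (b ⊗ₜ c)) =
        TensorProduct.map (LinearMap.mulRight k b) (LinearMap.mulRight k c)
          (TensorProduct.comm k K K (Coalgebra.comul (R := k) a)))
    (hio : ∀ b c : K,
      io (b ⊗ₜ c) =
        TensorProduct.map (HopfAlgebra.antipode (R := k))
          (TensorProduct.map (LinearMap.mulRight k b) (LinearMap.mulRight k c))
          (LinearMap.lTensor K (TensorProduct.comm k K K).toLinearMap
            ((TensorProduct.assoc k K K K)
              (LinearMap.rTensor K (Coalgebra.comul (R := k))
                (Coalgebra.comul (R := k) lam))))) :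
    pi ∘ₗ io = LinearMap.id := by
  apply TensorProduct.ext'
  intro b c
  simp only [LinearMap.comp_apply, LinearMap.id_apply]
  set r : Coalgebra.Repr k lam (K × K) := Coalgebra.Repr.arbitrary k lam with hrdef
  set r1 : ∀ i : K × K, Coalgebra.Repr k (r.left i) (K × K) :=
    fun i => Coalgebra.Repr.arbitrary k (r.left i) with hr1def
  set r2 : ∀ i : K × K, Coalgebra.Repr k (r.right i) (K × K) :=
    fun i => Coalgebra.Repr.arbitrary k (r.right i) with hr2def
  -- Step 1: rewrite `io (b ⊗ c)` as the double sum
  have h1 : pi (io (b ⊗ₜ c)) =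
      ∑ i ∈ r.index, ∑ j ∈ (r1 i).index,
        auxT k K b c ((r1 i).left j ⊗ₜ ((r1 i).right j ⊗ₜ r.right i)) := by
    rw [hio b c, ← r.eq, map_sum, map_sum, map_sum, map_sum, map_sum]
    refine Finset.sum_congr rfl fun i _ => ?_
    rw [rTensor_tmul, ← (r1 i).eq, TensorProduct.sum_tmul, map_sum, map_sum, map_sum, map_sum]
    refine Finset.sum_congr rfl fun j _ => ?_
    rw [TensorProduct.assoc_tmul, lTensor_tmul]
    rw [LinearEquiv.coe_coe, TensorProduct.comm_tmul, TensorProduct.map_tmul,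
      TensorProduct.map_tmul, hpi, auxT_tmul]
    simp [LinearMap.mulRight_apply]
  rw [h1]
  -- Step 2: coassociativity reindexing
  have h2 : ∑ i ∈ r.index, ∑ j ∈ (r1 i).index,
        auxT k K b c ((r1 i).left j ⊗ₜ ((r1 i).right j ⊗ₜ r.right i)) =
      ∑ i ∈ r.index, ∑ j ∈ (r2 i).index,
        auxT k K b c (r.left i ⊗ₜ ((r2 i).left j ⊗ₜ (r2 i).right j)) := by
    have := Coalgebra.sum_tmul_tmul_eq r r1 r2
    have := congrArg (auxT k K b c) this
    simpa only [map_sum] using this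
  rw [h2]
  -- Step 3: collapse the inner sums and use the antipode axiom
  have h3 : ∀ i : K × K, ∑ j ∈ (r2 i).index,
      auxT k K b c (r.left i ⊗ₜ ((r2 i).left j ⊗ₜ (r2 i).right j)) =
      auxT k K b c (r.left i ⊗ₜ Coalgebra.comul (R := k) (r.right i)) := by
    intro i
    rw [← (r2 i).eq]
    rw [TensorProduct.tmul_sum, map_sum]
  rw [Finset.sum_congr rfl fun i _ => h3 i]
  have h4 : ∀ i : K × K,
      auxT k K b c (r.left i ⊗ₜ Coalgebra.comul (R := k) (r.right i)) =
      TensorProduct.map (LinearMap.mulRight k b) (LinearMap.mulRight k c)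
        ((TensorProduct.comm k K K)
          (Coalgebra.comul (R := k)
            (HopfAlgebra.antipode (R := k) (r.left i) * r.right i))) := by
    intro i
    rw [auxT_apply, Bialgebra.comul_mul]
  rw [Finset.sum_congr rfl fun i _ => h4 i]
  have h5 : ∑ i ∈ r.index,
      HopfAlgebra.antipode (R := k) (r.left i) * r.right i = 1 := by
    rw [HopfAlgebra.sum_antipode_mul_eq_algebraMap_counit r, hn, map_one]
  rw [← map_sum, ← map_sum, ← map_sum, h5, Bialgebra.comul_one]
  have : (1 : K ⊗[k] K) = (1 : K) ⊗ₜ[k] (1 : K) := rfl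
  rw [this]
  simp
end

section
/- Let K be a finite-dimensional semisimple Hopf algebra with Haar integral λ. The composite ι ∘ π: K^{⊗3} → K^{⊗3} (with π(a⊗b⊗c) = a_{(2)}b ⊗ a_{(1)}c and ι(b⊗c) = S(λ_{(1)}) ⊗ λ_{(3)}b ⊗ λ_{(2)}c) equals the map a⊗b⊗c ↦ aS(λ_{(1)}) ⊗ λ_{(3)}b ⊗ λ_{(2)}c, and in particular is idempotent. -/
open TensorProduct LinearMap

namespace HopfIotaPiAux

open Coalgebra HopfAlgebra

universe u

section Conv
variable {R C A : Type*} [CommSemiring R] [AddCommMonoid C] [Module R C] [Coalgebra R C]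
  [Semiring A] [Algebra R A]

lemma sum_counit_smul_left_eq {ι : Type*} {c : C} (r : Repr R c ι) :
    ∑ i ∈ r.index, counit (R := R) (r.right i) • r.left i = c := by
  have h := congrArg (TensorProduct.rid R C) (sum_tmul_counit_eq r)
  simp only [map_sum, TensorProduct.rid_tmul, one_smul] at h
  exact h

lemma sum_counit_smul_right_eq {ι : Type*} {c : C} (r : Repr R c ι) :
    ∑ i ∈ r.index, counit (R := R) (r.left i) • r.right i = c := by
  have h := congrArg (TensorProduct.lid R C) (sum_counit_tmul_eq r)
  simp only [map_sum, TensorProduct.lid_tmul, one_smul] at h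
  exact h

lemma conv_cancel (f g h : C →ₗ[R] A)
    (h1 : mul' R A ∘ₗ TensorProduct.map f g ∘ₗ comul = Algebra.linearMap R A ∘ₗ counit)
    (h2 : mul' R A ∘ₗ TensorProduct.map g h ∘ₗ comul = Algebra.linearMap R A ∘ₗ counit) :
    f = h := by
  have H1 : ∀ (x : C) (r : Repr R x (C × C)),
      ∑ i ∈ r.index, f (r.left i) * g (r.right i) = algebraMap R A (counit x) := by
    intro x r
    have hx := congr($(h1) x)
    simp only [comp_apply, Algebra.linearMap_apply] at hx
    rw [← r.eq, map_sum, map_sum] at hx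
    simpa using hx
  have H2 : ∀ (x : C) (r : Repr R x (C × C)),
      ∑ i ∈ r.index, g (r.left i) * h (r.right i) = algebraMap R A (counit x) := by
    intro x r
    have hx := congr($(h2) x)
    simp only [comp_apply, Algebra.linearMap_apply] at hx
    rw [← r.eq, map_sum, map_sum] at hx
    simpa using hx
  ext c
  set r := ℛ R c with hr
  set r1 : ∀ i : r.ι, Repr R (r.left i) (C × C) := fun i => ℛ R (r.left i) with hr1
  set r2 : ∀ i : r.ι, Repr R (r.right i) (C × C) := fun i => ℛ R (r.right i) with hr2
  have key := congrArg (mul' R A ∘ₗ lTensor A (mul' R A))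
    (sum_map_tmul_tmul_eq (R := R) f g h c (repr := r) (a₁ := r1) (a₂ := r2))
  simp only [map_sum, comp_apply, lTensor_tmul, mul'_apply] at key
  calc f c = f (∑ i ∈ r.index, counit (R := R) (r.right i) • r.left i) := by
        rw [sum_counit_smul_left_eq]
    _ = ∑ i ∈ r.index, f (r.left i) * algebraMap R A (counit (R := R) (r.right i)) := by
        rw [map_sum]
        exact Finset.sum_congr rfl fun i _ => by
          rw [map_smul, Algebra.smul_def, Algebra.commutes]
    _ = ∑ i ∈ r.index, f (r.left i) *
          (∑ j ∈ (r2 i).index, g ((r2 i).left j) * h ((r2 i).right j)) :=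
        Finset.sum_congr rfl fun i _ => by rw [H2 _ (r2 i)]
    _ = ∑ i ∈ r.index, ∑ j ∈ (r2 i).index,
          f (r.left i) * (g ((r2 i).left j) * h ((r2 i).right j)) :=
        Finset.sum_congr rfl fun i _ => by rw [Finset.mul_sum]
    _ = ∑ i ∈ r.index, ∑ j ∈ (r1 i).index,
          f ((r1 i).left j) * (g ((r1 i).right j) * h (r.right i)) := key
    _ = ∑ i ∈ r.index, algebraMap R A (counit (R := R) (r.left i)) * h (r.right i) := by
        refine Finset.sum_congr rfl fun i _ => ?_
        rw [← H1 _ (r1 i), Finset.sum_mul]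
        exact Finset.sum_congr rfl fun j _ => (mul_assoc _ _ _).symm
    _ = ∑ i ∈ r.index, counit (R := R) (r.left i) • h (r.right i) :=
        Finset.sum_congr rfl fun i _ => by rw [Algebra.smul_def]
    _ = h c := by
        simp only [← map_smul, ← map_sum, sum_counit_smul_right_eq]

end Conv

section Antipode

variable {R A : Type u} [CommRing R] [Ring A] [HopfAlgebra R A]

/-- A representation of `comul (x * y)` built from representations of `x` and `y`. -/
def reprMul {ι κ : Type*} {x y : A} (rx : Repr R x ι) (ry : Repr R y κ) : Repr R (x * y) (ι × κ) where
  index := rx.index ×ˢ ry.index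
  left := fun p => rx.left p.1 * ry.left p.2
  right := fun p => rx.right p.1 * ry.right p.2
  eq := by
    rw [Bialgebra.comul_mul, ← rx.eq, ← ry.eq, Finset.sum_mul_sum, Finset.sum_product]
    simp [Algebra.TensorProduct.tmul_mul_tmul]

lemma comul_tmul {ι κ : Type*} (x y : A) (rx : Repr R x ι) (ry : Repr R y κ) :
    comul (R := R) (x ⊗ₜ[R] y) = ∑ i ∈ rx.index, ∑ j ∈ ry.index,
      (rx.left i ⊗ₜ[R] ry.left j) ⊗ₜ[R] (rx.right i ⊗ₜ[R] ry.right j) := by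
  have : comul (R := R) (x ⊗ₜ[R] y) =
      TensorProduct.tensorTensorTensorComm R A A A A (comul x ⊗ₜ[R] comul y) := rfl
  rw [this, ← rx.eq, ← ry.eq, TensorProduct.sum_tmul]
  simp only [TensorProduct.tmul_sum, map_sum, TensorProduct.tensorTensorTensorComm_tmul]

theorem antipode_mul_rev (x y : A) :
    antipode (R := R) (x * y) = antipode (R := R) y * antipode (R := R) x := by
  have h1 : mul' R A ∘ₗ
      TensorProduct.map (antipode (R := R) ∘ₗ mul' R A) (mul' R A) ∘ₗ
        comul (R := R) (A := A ⊗[R] A) = Algebra.linearMap R A ∘ₗ counit := by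
    apply TensorProduct.ext'
    intro x y
    set rx := ℛ R x
    set ry := ℛ R y
    simp only [comp_apply, comul_tmul x y rx ry, map_sum, TensorProduct.map_tmul,
      mul'_apply, Algebra.linearMap_apply]
    have this' : ∑ p ∈ rx.index ×ˢ ry.index,
        antipode (R := R) (rx.left p.1 * ry.left p.2) * (rx.right p.1 * ry.right p.2) =
        algebraMap R A (counit (x * y)) := sum_antipode_mul_eq_algebraMap_counit (R := R) (reprMul rx ry)
    rw [Finset.sum_product] at this'
    rw [this']
    simp [Bialgebra.counit_mul]
    exact Algebra.commutes _ _
  have h2 : mul' R A ∘ₗ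
      TensorProduct.map (mul' R A)
        (mul' R A ∘ₗ TensorProduct.map (antipode (R := R)) (antipode (R := R)) ∘ₗ
          (TensorProduct.comm R A A).toLinearMap) ∘ₗ
        comul (R := R) (A := A ⊗[R] A) = Algebra.linearMap R A ∘ₗ counit := by
    apply TensorProduct.ext'
    intro x y
    set rx := ℛ R x
    set ry := ℛ R y
    simp only [comp_apply, comul_tmul x y rx ry, map_sum, TensorProduct.map_tmul,
      mul'_apply, Algebra.linearMap_apply, LinearEquiv.coe_coe, TensorProduct.comm_tmul]
    have hxy : ∀ i ∈ rx.index, ∑ j ∈ ry.index,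
        (rx.left i * ry.left j) *
          (antipode (R := R) (ry.right j) * antipode (R := R) (rx.right i))
        = counit (R := R) y • (rx.left i * antipode (R := R) (rx.right i)) := by
      intro i _
      have : ∀ j ∈ ry.index,
          (rx.left i * ry.left j) *
            (antipode (R := R) (ry.right j) * antipode (R := R) (rx.right i))
          = rx.left i * ((ry.left j * antipode (R := R) (ry.right j)) *
              antipode (R := R) (rx.right i)) := by
        intro j _; noncomm_ring
      rw [Finset.sum_congr rfl this, ← Finset.mul_sum, ← Finset.sum_mul,
        sum_mul_antipode_eq_algebraMap_counit (R := R) ry, ← Algebra.smul_def, mul_smul_comm]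
    rw [Finset.sum_congr rfl hxy, ← Finset.smul_sum, sum_mul_antipode_eq_algebraMap_counit (R := R) rx]
    simp only [Algebra.smul_def, ← map_mul]
    congr 1
  have key := conv_cancel (antipode (R := R) ∘ₗ mul' R A) (mul' R A)
    (mul' R A ∘ₗ TensorProduct.map (antipode (R := R)) (antipode (R := R)) ∘ₗ
      (TensorProduct.comm R A A).toLinearMap) h1 h2
  have := congr($key (x ⊗ₜ[R] y))
  simpa using this

end Antipode

section Haar

variable {k K : Type} [Field k] [Ring K] [HopfAlgebra k K]

lemma collapse_left (a : K) (ra : Repr k a (K × K)) (ry : ∀ j : ra.ι, Repr k (ra.right j) (K × K)) :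
    ∑ j ∈ ra.index, ∑ m ∈ (ry j).index,
      (ra.left j * antipode (R := k) ((ry j).left m)) ⊗ₜ[k] (ry j).right m
      = (1 : K) ⊗ₜ[k] a := by
  set rxl : ∀ j : ra.ι, Repr k (ra.left j) (K × K) := fun j => ℛ k (ra.left j) with hrxl
  have cass := sum_tmul_tmul_eq ra rxl ry
  have key := congrArg
    (rTensor K (mul' k K ∘ₗ lTensor K (antipode (R := k))) ∘ₗ
      (TensorProduct.assoc k K K K).symm.toLinearMap) cass
  simp only [map_sum, comp_apply, LinearEquiv.coe_coe, TensorProduct.assoc_symm_tmul,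
    rTensor_tmul, lTensor_tmul, mul'_apply] at key
  refine key.symm.trans ?_
  calc ∑ j ∈ ra.index, ∑ m ∈ (rxl j).index,
        ((rxl j).left m * antipode (R := k) ((rxl j).right m)) ⊗ₜ[k] ra.right j
      = ∑ j ∈ ra.index,
          (∑ m ∈ (rxl j).index, (rxl j).left m * antipode (R := k) ((rxl j).right m))
            ⊗ₜ[k] ra.right j :=
        Finset.sum_congr rfl fun j _ => (TensorProduct.sum_tmul _ _ _).symm
    _ = ∑ j ∈ ra.index, (1 : K) ⊗ₜ[k] (counit (R := k) (ra.left j) • ra.right j) := by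
        refine Finset.sum_congr rfl fun j _ => ?_
        rw [sum_mul_antipode_eq_algebraMap_counit (R := k) (rxl j), Algebra.algebraMap_eq_smul_one,
          TensorProduct.smul_tmul]
    _ = (1 : K) ⊗ₜ[k] a := by
        rw [← TensorProduct.tmul_sum, sum_counit_smul_right_eq ra]

lemma haar_sep (lam : K) (hr : ∀ h : K, lam * h = counit (R := k) h • lam)
    (rl : Repr k lam (K × K)) (a : K) :
    ∑ i ∈ rl.index, antipode (R := k) (rl.left i) ⊗ₜ[k] (rl.right i * a)
    = ∑ i ∈ rl.index, (a * antipode (R := k) (rl.left i)) ⊗ₜ[k] rl.right i := by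
  have absorb : ∀ h : K, comul (R := k) lam * comul h = counit (R := k) h • comul (R := k) lam :=
    fun h => by rw [← Bialgebra.comul_mul, hr h, map_smul]
  set ra := ℛ k a with hra
  set ry : ∀ j : ra.ι, Repr k (ra.right j) (K × K) := fun j => ℛ k (ra.right j) with hry
  set Φ : K ⊗[k] (K ⊗[k] K) →ₗ[k] K ⊗[k] K :=
    (TensorProduct.map (mul' k K ∘ₗ lTensor K (antipode (R := k))) LinearMap.id) ∘ₗ
      (TensorProduct.assoc k K K K).symm.toLinearMap with hPhi
  have hPhit : ∀ x g h : K, Φ (x ⊗ₜ[k] (g ⊗ₜ[k] h)) = (x * antipode (R := k) g) ⊗ₜ[k] h := by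
    intro x g h
    simp [hPhi]
  set E : K ⊗[k] (K ⊗[k] K) :=
    ∑ j ∈ ra.index, ra.left j ⊗ₜ[k] (comul (R := k) lam * comul (ra.right j)) with hE
  have hE1 : E = a ⊗ₜ[k] comul (R := k) lam := by
    rw [hE]
    calc ∑ j ∈ ra.index, ra.left j ⊗ₜ[k] (comul (R := k) lam * comul (ra.right j))
        = ∑ j ∈ ra.index, counit (R := k) (ra.right j) • ra.left j ⊗ₜ[k] comul (R := k) lam :=
          Finset.sum_congr rfl fun j _ => by rw [absorb, TensorProduct.tmul_smul]
      _ = (∑ j ∈ ra.index, counit (R := k) (ra.right j) • ra.left j) ⊗ₜ[k]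
            comul (R := k) lam := by
          rw [TensorProduct.sum_tmul]
          exact Finset.sum_congr rfl fun j _ => by rw [TensorProduct.smul_tmul']
      _ = a ⊗ₜ[k] comul (R := k) lam := by rw [sum_counit_smul_left_eq ra]
  have hE2 : E = ∑ j ∈ ra.index, ∑ i ∈ rl.index, ∑ m ∈ (ry j).index,
      ra.left j ⊗ₜ[k] ((rl.left i * (ry j).left m) ⊗ₜ[k] (rl.right i * (ry j).right m)) := by
    rw [hE]
    refine Finset.sum_congr rfl fun j _ => ?_
    rw [← rl.eq, ← (ry j).eq, Finset.sum_mul_sum]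
    simp only [Algebra.TensorProduct.tmul_mul_tmul, TensorProduct.tmul_sum]
  have hF1 : Φ E = ∑ i ∈ rl.index, (a * antipode (R := k) (rl.left i)) ⊗ₜ[k] rl.right i := by
    rw [hE1, ← rl.eq, TensorProduct.tmul_sum, map_sum]
    exact Finset.sum_congr rfl fun i _ => hPhit _ _ _
  have hF2 : Φ E = ∑ i ∈ rl.index, antipode (R := k) (rl.left i) ⊗ₜ[k] (rl.right i * a) := by
    rw [hE2, map_sum]
    calc ∑ j ∈ ra.index, Φ (∑ i ∈ rl.index, ∑ m ∈ (ry j).index,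
          ra.left j ⊗ₜ[k] ((rl.left i * (ry j).left m) ⊗ₜ[k] (rl.right i * (ry j).right m)))
        = ∑ j ∈ ra.index, ∑ i ∈ rl.index, ∑ m ∈ (ry j).index,
            ((ra.left j * antipode (R := k) ((ry j).left m)) * antipode (R := k) (rl.left i))
              ⊗ₜ[k] (rl.right i * (ry j).right m) := by
          refine Finset.sum_congr rfl fun j _ => ?_
          rw [map_sum]
          refine Finset.sum_congr rfl fun i _ => ?_
          rw [map_sum]
          refine Finset.sum_congr rfl fun m _ => ?_
          rw [hPhit, antipode_mul_rev, ← mul_assoc]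
      _ = ∑ i ∈ rl.index, ∑ j ∈ ra.index, ∑ m ∈ (ry j).index,
            ((ra.left j * antipode (R := k) ((ry j).left m)) * antipode (R := k) (rl.left i))
              ⊗ₜ[k] (rl.right i * (ry j).right m) := Finset.sum_comm
      _ = ∑ i ∈ rl.index, antipode (R := k) (rl.left i) ⊗ₜ[k] (rl.right i * a) := by
          refine Finset.sum_congr rfl fun i _ => ?_
          have hc := congrArg (TensorProduct.map
            (mulRight k (antipode (R := k) (rl.left i))) (mulLeft k (rl.right i)))
            (collapse_left a ra ry)
          simp only [map_sum, TensorProduct.map_tmul, mulRight_apply, mulLeft_apply,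
            one_mul] at hc
          exact hc
  rw [← hF2, hF1]

end Haar

end HopfIotaPiAux

namespace HopfIotaPiAux

lemma sum_sigma_comm {ι : Type*} {κ : ι → Type*} {M : Type*} [AddCommMonoid M]
    (s : Finset ι) (t : ∀ i, Finset (κ i)) (F : (i : ι) → κ i → (i' : ι) → κ i' → M) :
    ∑ i ∈ s, ∑ m ∈ t i, ∑ i' ∈ s, ∑ m' ∈ t i', F i m i' m'
    = ∑ i' ∈ s, ∑ m' ∈ t i', ∑ i ∈ s, ∑ m ∈ t i, F i m i' m' := by
  have h := Finset.sum_comm (s := s.sigma t) (t := s.sigma t)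
    (f := fun x y => F x.1 x.2 y.1 y.2)
  simpa only [Finset.sum_sigma] using h

end HopfIotaPiAux

set_option maxHeartbeats 1000000 in
open HopfIotaPiAux Coalgebra HopfAlgebra in
/-- For a finite-dimensional semisimple Hopf algebra `K` with Haar integral
`λ`, the composite `ι ∘ π : K^⊗3 → K^⊗3` equals the map
`a⊗b⊗c ↦ aS(λ₍₁₎) ⊗ λ₍₃₎b ⊗ λ₍₂₎c`, and in particular is idempotent. -/
theorem hopf_iota_pi_idempotent
    (k K : Type) [Field k] [IsAlgClosed k] [CharZero k]
    [Ring K] [HopfAlgebra k K] [FiniteDimensional k K] [IsSemisimpleRing K]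
    (lam : K)
    (hl : ∀ h : K, h * lam = Coalgebra.counit (R := k) h • lam)
    (hr : ∀ h : K, lam * h = Coalgebra.counit (R := k) h • lam)
    (hn : Coalgebra.counit (R := k) lam = 1)
    (pi : K ⊗[k] (K ⊗[k] K) →ₗ[k] K ⊗[k] K)
    (io : K ⊗[k] K →ₗ[k] K ⊗[k] (K ⊗[k] K))
    (hpi : ∀ a b c : K,
      pi (a ⊗ₜ (b ⊗ₜ c)) =
        TensorProduct.map (LinearMap.mulRight k b) (LinearMap.mulRight k c)
          (TensorProduct.comm k K K (Coalgebra.comul (R := k) a)))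
    (hio : ∀ b c : K,
      io (b ⊗ₜ c) =
        TensorProduct.map (HopfAlgebra.antipode (R := k))
          (TensorProduct.map (LinearMap.mulRight k b) (LinearMap.mulRight k c))
          (LinearMap.lTensor K (TensorProduct.comm k K K).toLinearMap
            ((TensorProduct.assoc k K K K)
              (LinearMap.rTensor K (Coalgebra.comul (R := k))
                (Coalgebra.comul (R := k) lam))))) :
    (∀ a b c : K,
      (io ∘ₗ pi) (a ⊗ₜ (b ⊗ₜ c)) =
        TensorProduct.map
          (LinearMap.mulLeft k a ∘ₗ HopfAlgebra.antipode (R := k))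
          (TensorProduct.map (LinearMap.mulRight k b) (LinearMap.mulRight k c))
          (LinearMap.lTensor K (TensorProduct.comm k K K).toLinearMap
            ((TensorProduct.assoc k K K K)
              (LinearMap.rTensor K (Coalgebra.comul (R := k))
                (Coalgebra.comul (R := k) lam))))) ∧
    (io ∘ₗ pi) ∘ₗ (io ∘ₗ pi) = io ∘ₗ pi := by
  set rl := ℛ k lam with hrl
  set rli : ∀ i : rl.ι, Repr k (rl.left i) (K × K) := fun i => ℛ k (rl.left i) with hrli
  set rri : ∀ i : rl.ι, Repr k (rl.right i) (K × K) := fun i => ℛ k (rl.right i) with hrri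
  have hD : rTensor K (comul (R := k)) (comul (R := k) lam)
      = ∑ i ∈ rl.index, ∑ m ∈ (rli i).index,
          (((rli i).left m ⊗ₜ[k] (rli i).right m) ⊗ₜ[k] rl.right i) := by
    rw [← rl.eq, map_sum]
    refine Finset.sum_congr rfl fun i _ => ?_
    rw [rTensor_tmul, ← (rli i).eq, TensorProduct.sum_tmul]
  have hw : ∀ (f : K →ₗ[k] K) (u v : K),
      TensorProduct.map f (TensorProduct.map (mulRight k u) (mulRight k v))
        (lTensor K (TensorProduct.comm k K K).toLinearMap
          ((TensorProduct.assoc k K K K) (rTensor K (comul (R := k)) (comul (R := k) lam))))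
      = ∑ i ∈ rl.index, ∑ m ∈ (rli i).index,
          f ((rli i).left m) ⊗ₜ[k] ((rl.right i * u) ⊗ₜ[k] ((rli i).right m * v)) := by
    intro f u v
    rw [hD]
    simp only [map_sum, LinearEquiv.coe_coe, TensorProduct.assoc_tmul, lTensor_tmul,
      TensorProduct.comm_tmul, TensorProduct.map_tmul, mulRight_apply]
  -- the coassociativity conversion between `(Δ ⊗ 1)Δλ` and `(1 ⊗ Δ)Δλ` pictures
  have hθ : ∀ (f : K →ₗ[k] K) (u v : K),
      ∑ i ∈ rl.index, ∑ m ∈ (rli i).index,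
        f ((rli i).left m) ⊗ₜ[k] ((rl.right i * u) ⊗ₜ[k] ((rli i).right m * v))
      = ∑ i ∈ rl.index, ∑ n ∈ (rri i).index,
        f (rl.left i) ⊗ₜ[k] (((rri i).right n * u) ⊗ₜ[k] ((rri i).left n * v)) := by
    intro f u v
    have cass := sum_tmul_tmul_eq rl rli rri
    have h2 := congrArg (TensorProduct.map f
      (TensorProduct.map (mulRight k u) (mulRight k v) ∘ₗ
        (TensorProduct.comm k K K).toLinearMap)) cass
    simpa only [map_sum, TensorProduct.map_tmul, comp_apply, LinearEquiv.coe_coe,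
      TensorProduct.comm_tmul, mulRight_apply] using h2
  -- main formula: io ∘ pi on pure tensors
  have hmain : ∀ a b c : K, io (pi (a ⊗ₜ[k] (b ⊗ₜ[k] c)))
      = ∑ i ∈ rl.index, ∑ m ∈ (rli i).index,
          (a * antipode (R := k) ((rli i).left m)) ⊗ₜ[k]
            ((rl.right i * b) ⊗ₜ[k] ((rli i).right m * c)) := by
    intro a b c
    set ra := ℛ k a with hra
    have hpi' : pi (a ⊗ₜ[k] (b ⊗ₜ[k] c))
        = ∑ j ∈ ra.index, (ra.right j * b) ⊗ₜ[k] (ra.left j * c) := by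
      rw [hpi, ← ra.eq, map_sum, map_sum]
      simp only [TensorProduct.comm_tmul, TensorProduct.map_tmul, mulRight_apply]
    rw [hpi', map_sum]
    have hio' : ∀ j ∈ ra.index, io ((ra.right j * b) ⊗ₜ[k] (ra.left j * c))
        = ∑ i ∈ rl.index, ∑ n ∈ (rri i).index,
            antipode (R := k) (rl.left i) ⊗ₜ[k]
              (((rri i).right n * (ra.right j * b)) ⊗ₜ[k]
                ((rri i).left n * (ra.left j * c))) := by
      intro j _
      rw [hio, hw (antipode (R := k)) (ra.right j * b) (ra.left j * c),
        hθ (antipode (R := k)) (ra.right j * b) (ra.left j * c)]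
    rw [Finset.sum_congr rfl hio']
    -- the separability-idempotent identity, transported
    have hsep := haar_sep lam hr rl a
    have hY := congrArg (lTensor K (TensorProduct.map (mulRight k b) (mulRight k c) ∘ₗ
      (TensorProduct.comm k K K).toLinearMap ∘ₗ comul (R := k))) hsep
    simp only [map_sum, lTensor_tmul] at hY
    have hinner1 : ∀ i ∈ rl.index,
        antipode (R := k) (rl.left i) ⊗ₜ[k]
          ((TensorProduct.map (mulRight k b) (mulRight k c) ∘ₗ
            (TensorProduct.comm k K K).toLinearMap ∘ₗ comul (R := k)) (rl.right i * a))
        = ∑ n ∈ (rri i).index, ∑ j ∈ ra.index,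
            antipode (R := k) (rl.left i) ⊗ₜ[k]
              ((((rri i).right n * ra.right j) * b) ⊗ₜ[k]
                (((rri i).left n * ra.left j) * c)) := by
      intro i _
      rw [comp_apply, comp_apply, Bialgebra.comul_mul, ← (rri i).eq, ← ra.eq,
        Finset.sum_mul_sum]
      simp only [Algebra.TensorProduct.tmul_mul_tmul, map_sum, LinearEquiv.coe_coe,
        TensorProduct.comm_tmul, TensorProduct.map_tmul, mulRight_apply,
        TensorProduct.tmul_sum]
    have hinner2 : ∀ i ∈ rl.index,
        (a * antipode (R := k) (rl.left i)) ⊗ₜ[k]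
          ((TensorProduct.map (mulRight k b) (mulRight k c) ∘ₗ
            (TensorProduct.comm k K K).toLinearMap ∘ₗ comul (R := k)) (rl.right i))
        = ∑ n ∈ (rri i).index,
            (a * antipode (R := k) (rl.left i)) ⊗ₜ[k]
              (((rri i).right n * b) ⊗ₜ[k] ((rri i).left n * c)) := by
      intro i _
      rw [comp_apply, comp_apply, ← (rri i).eq]
      simp only [map_sum, LinearEquiv.coe_coe, TensorProduct.comm_tmul,
        TensorProduct.map_tmul, mulRight_apply, TensorProduct.tmul_sum]
    rw [Finset.sum_congr rfl hinner1, Finset.sum_congr rfl hinner2] at hY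
    calc ∑ j ∈ ra.index, ∑ i ∈ rl.index, ∑ n ∈ (rri i).index,
          antipode (R := k) (rl.left i) ⊗ₜ[k]
            (((rri i).right n * (ra.right j * b)) ⊗ₜ[k]
              ((rri i).left n * (ra.left j * c)))
        = ∑ i ∈ rl.index, ∑ n ∈ (rri i).index, ∑ j ∈ ra.index,
            antipode (R := k) (rl.left i) ⊗ₜ[k]
              ((((rri i).right n * ra.right j) * b) ⊗ₜ[k]
                (((rri i).left n * ra.left j) * c)) := by
          rw [Finset.sum_comm]
          refine Finset.sum_congr rfl fun i _ => ?_
          rw [Finset.sum_comm]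
          exact Finset.sum_congr rfl fun n _ => Finset.sum_congr rfl fun j _ => by
            rw [mul_assoc, mul_assoc]
      _ = ∑ i ∈ rl.index, ∑ n ∈ (rri i).index,
            (a * antipode (R := k) (rl.left i)) ⊗ₜ[k]
              (((rri i).right n * b) ⊗ₜ[k] ((rri i).left n * c)) := hY
      _ = ∑ i ∈ rl.index, ∑ m ∈ (rli i).index,
            (a * antipode (R := k) ((rli i).left m)) ⊗ₜ[k]
              ((rl.right i * b) ⊗ₜ[k] ((rli i).right m * c)) := by
          have := hθ (mulLeft k a ∘ₗ antipode (R := k)) b c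
          simp only [comp_apply, mulLeft_apply] at this
          exact this.symm
  -- conclusion, part 1
  have part1 : ∀ a b c : K,
      (io ∘ₗ pi) (a ⊗ₜ[k] (b ⊗ₜ[k] c)) =
        TensorProduct.map
          (mulLeft k a ∘ₗ antipode (R := k))
          (TensorProduct.map (mulRight k b) (mulRight k c))
          (lTensor K (TensorProduct.comm k K K).toLinearMap
            ((TensorProduct.assoc k K K K)
              (rTensor K (comul (R := k)) (comul (R := k) lam)))) := by
    intro a b c
    rw [comp_apply, hmain a b c, hw (mulLeft k a ∘ₗ antipode (R := k)) b c]
    simp only [comp_apply, mulLeft_apply]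
  refine ⟨part1, ?_⟩
  -- part 2 : idempotency
  have hlamlam : lam * lam = lam := by rw [hr lam, hn, one_smul]
  have hPsi : ∀ w : K ⊗[k] K,
      (Algebra.TensorProduct.map (Bialgebra.comulAlgHom k K) (AlgHom.id k K)) w
        = rTensor K (comul (R := k)) w := by
    intro w
    induction w using TensorProduct.induction_on with
    | zero => simp
    | tmul u v => simp [Bialgebra.comulAlgHom_apply]
    | add u v hu hv => rw [map_add, map_add, hu, hv]
  have hDD : rTensor K (comul (R := k)) (comul (R := k) lam) *
      rTensor K (comul (R := k)) (comul (R := k) lam)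
      = rTensor K (comul (R := k)) (comul (R := k) lam) := by
    rw [← hPsi, ← Bialgebra.comulAlgHom_apply (R := k), ← map_mul, ← map_mul, hlamlam]
  apply TensorProduct.ext'
  intro a z
  induction z using TensorProduct.induction_on with
  | zero => simp
  | add u v hu hv => simp only [TensorProduct.tmul_add, map_add, hu, hv]
  | tmul b c =>
    simp only [comp_apply]
    rw [hmain a b c]
    simp only [map_sum]
    set Tm : (K ⊗[k] K) ⊗[k] K →ₗ[k] K ⊗[k] (K ⊗[k] K) :=
      TensorProduct.map (mulLeft k a ∘ₗ antipode (R := k))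
        (TensorProduct.map (mulRight k b) (mulRight k c) ∘ₗ
          (TensorProduct.comm k K K).toLinearMap)
        ∘ₗ (TensorProduct.assoc k K K K).toLinearMap with hTm
    have hTmt : ∀ x y z : K, Tm ((x ⊗ₜ[k] y) ⊗ₜ[k] z)
        = (a * antipode (R := k) x) ⊗ₜ[k] ((z * b) ⊗ₜ[k] (y * c)) := by
      intro x y z
      simp [hTm]
    have hterm : ∀ (i : rl.ι) (m : (rli i).ι) (i' : rl.ι) (m' : (rli i').ι),
        Tm ((((rli i').left m' * (rli i).left m) ⊗ₜ[k]
            ((rli i').right m' * (rli i).right m)) ⊗ₜ[k] (rl.right i' * rl.right i))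
        = ((a * antipode (R := k) ((rli i).left m)) *
              antipode (R := k) ((rli i').left m')) ⊗ₜ[k]
            ((rl.right i' * (rl.right i * b)) ⊗ₜ[k]
              ((rli i').right m' * ((rli i).right m * c))) := by
      intro i m i' m'
      rw [hTmt, antipode_mul_rev, ← mul_assoc,
        mul_assoc (rl.right i') (rl.right i) b,
        mul_assoc ((rli i').right m') ((rli i).right m) c]
    have hTmD : Tm (rTensor K (comul (R := k)) (comul (R := k) lam))
        = ∑ i ∈ rl.index, ∑ m ∈ (rli i).index,
            (a * antipode (R := k) ((rli i).left m)) ⊗ₜ[k]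
              ((rl.right i * b) ⊗ₜ[k] ((rli i).right m * c)) := by
      rw [hD]
      simp only [map_sum]
      exact Finset.sum_congr rfl fun i _ => Finset.sum_congr rfl fun m _ => hTmt _ _ _
    calc ∑ i ∈ rl.index, ∑ m ∈ (rli i).index, io (pi
            ((a * antipode (R := k) ((rli i).left m)) ⊗ₜ[k]
              ((rl.right i * b) ⊗ₜ[k] ((rli i).right m * c))))
        = ∑ i ∈ rl.index, ∑ m ∈ (rli i).index, ∑ i' ∈ rl.index, ∑ m' ∈ (rli i').index,
            Tm ((((rli i').left m' * (rli i).left m) ⊗ₜ[k]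
                ((rli i').right m' * (rli i).right m)) ⊗ₜ[k]
              (rl.right i' * rl.right i)) := by
          refine Finset.sum_congr rfl fun i _ => Finset.sum_congr rfl fun m _ => ?_
          rw [hmain]
          exact Finset.sum_congr rfl fun i' _ => Finset.sum_congr rfl fun m' _ =>
            (hterm i m i' m').symm
      _ = ∑ i' ∈ rl.index, ∑ m' ∈ (rli i').index, ∑ i ∈ rl.index, ∑ m ∈ (rli i).index,
            Tm ((((rli i').left m' * (rli i).left m) ⊗ₜ[k]
                ((rli i').right m' * (rli i).right m)) ⊗ₜ[k]
              (rl.right i' * rl.right i)) :=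
          sum_sigma_comm rl.index (fun i => (rli i).index) _
      _ = Tm (rTensor K (comul (R := k)) (comul (R := k) lam) *
            rTensor K (comul (R := k)) (comul (R := k) lam)) := by
          have hDDexp : rTensor K (comul (R := k)) (comul (R := k) lam) *
              rTensor K (comul (R := k)) (comul (R := k) lam)
              = ∑ i' ∈ rl.index, ∑ m' ∈ (rli i').index, ∑ i ∈ rl.index, ∑ m ∈ (rli i).index,
                (((rli i').left m' * (rli i).left m) ⊗ₜ[k]
                  ((rli i').right m' * (rli i).right m)) ⊗ₜ[k]
                  (rl.right i' * rl.right i) := by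
            rw [hD, Finset.sum_mul]
            refine Finset.sum_congr rfl fun i' _ => ?_
            rw [Finset.sum_mul]
            refine Finset.sum_congr rfl fun m' _ => ?_
            rw [Finset.mul_sum]
            refine Finset.sum_congr rfl fun i _ => ?_
            rw [Finset.mul_sum]
            refine Finset.sum_congr rfl fun m _ => ?_
            rw [Algebra.TensorProduct.tmul_mul_tmul, Algebra.TensorProduct.tmul_mul_tmul]
          rw [hDDexp]
          simp only [map_sum]
      _ = ∑ i ∈ rl.index, ∑ m ∈ (rli i).index,
            (a * antipode (R := k) ((rli i).left m)) ⊗ₜ[k]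
              ((rl.right i * b) ⊗ₜ[k] ((rli i).right m * c)) := by
          rw [hDD, hTmD]
end

section
/- Let A be a commutative symmetric Δ-separable Frobenius algebra in a braided monoidal category C. Define T = A (as an A-A⊗A-bimodule via multiplication) and α = ᾱ = (μ ⊗ id_A) ∘ (id_A ⊗ Δ): A ⊗ A → A ⊗ A, together with ψ = id_A and φ = 1. Then α ∘ ᾱ and ᾱ ∘ α both equal the idempotent (μ⊗μ)(id ⊗ Δη ⊗ id) projecting onto the relative tensor product A ⊗_A A; i.e. conditions (O3) and (O4) of an orbifold datum hold. -/
open CategoryTheory MonoidalCategory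

/-- For a commutative symmetric Δ-separable Frobenius algebra `A` in a braided
monoidal category, with `T = A` and `α = ᾱ = (μ ⊗ id) ∘ (id ⊗ Δ)`, `ψ = id`,
`φ = 1`, the composites `α ∘ ᾱ` and `ᾱ ∘ α` both equal the idempotent
`(μ ⊗ μ) ∘ (id ⊗ Δη ⊗ id)` projecting onto the relative tensor product
`A ⊗_A A`, i.e. conditions (O3) and (O4) of an orbifold datum hold. -/
theorem condensable_algebra_O3_O4
    {C : Type*} [Category C] [MonoidalCategory C] [BraidedCategory C]
    (A : C)
    (mu : A ⊗ A ⟶ A) (eta : 𝟙_ C ⟶ A)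
    (delta : A ⟶ A ⊗ A) (eps : A ⟶ 𝟙_ C)
    -- algebra axioms
    (hassoc : (α_ A A A).hom ≫ (A ◁ mu) ≫ mu = (mu ▷ A) ≫ mu)
    (hunitl : (eta ▷ A) ≫ mu = (λ_ A).hom)
    (hunitr : (A ◁ eta) ≫ mu = (ρ_ A).hom)
    -- coalgebra axioms
    (hcoassoc : delta ≫ (delta ▷ A) ≫ (α_ A A A).hom = delta ≫ (A ◁ delta))
    (hcounitl : delta ≫ (eps ▷ A) ≫ (λ_ A).hom = 𝟙 A)
    (hcounitr : delta ≫ (A ◁ eps) ≫ (ρ_ A).hom = 𝟙 A)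
    -- Frobenius relations
    (hfrob1 : (delta ▷ A) ≫ (α_ A A A).hom ≫ (A ◁ mu) = mu ≫ delta)
    (hfrob2 : (A ◁ delta) ≫ (α_ A A A).inv ≫ (mu ▷ A) = mu ≫ delta)
    -- Δ-separability
    (hsep : delta ≫ mu = 𝟙 A)
    -- commutativity
    (hcomm : (β_ A A).hom ≫ mu = mu)
    -- symmetry of the Frobenius pairing
    (hsymm : (β_ A A).hom ≫ mu ≫ eps = mu ≫ eps) :
    -- ᾱ ∘ α (= α ∘ ᾱ, as α = ᾱ) equals the relative-tensor-product idempotent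
    ((A ◁ delta) ≫ (α_ A A A).inv ≫ (mu ▷ A)) ≫
        ((A ◁ delta) ≫ (α_ A A A).inv ≫ (mu ▷ A)) =
      (A ◁ (λ_ A).inv) ≫ (A ◁ ((eta ≫ delta) ▷ A)) ≫ (A ◁ (α_ A A A).hom) ≫
        (α_ A A (A ⊗ A)).inv ≫ (mu ⊗ₘ mu) := by
  -- Left-hand side: Frobenius relation twice, then Δ-separability.
  rw [hfrob2]
  have hL : (mu ≫ delta) ≫ (mu ≫ delta) = mu ≫ delta := by
    rw [Category.assoc, ← Category.assoc delta mu delta, hsep, Category.id_comp]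
  rw [hL]
  -- Right-hand side: rearrange by coherence into a form where the Frobenius
  -- relations and unitality apply.
  have hRearr :
      (A ◁ (λ_ A).inv) ≫ (A ◁ ((eta ≫ delta) ▷ A)) ≫ (A ◁ (α_ A A A).hom) ≫
          (α_ A A (A ⊗ A)).inv ≫ (mu ⊗ₘ mu) =
        (A ◁ (λ_ A).inv) ≫ (A ◁ (eta ▷ A)) ≫ (α_ A A A).inv ≫
          (((A ◁ delta) ≫ (α_ A A A).inv ≫ (mu ▷ A)) ▷ A) ≫
          (α_ A A A).hom ≫ (A ◁ mu) := by
    rw [comp_whiskerRight, MonoidalCategory.whiskerLeft_comp, MonoidalCategory.tensorHom_def]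
    monoidal
  have hUnit : (A ◁ (λ_ A).inv) ≫ (A ◁ (eta ▷ A)) ≫ (α_ A A A).inv ≫ (mu ▷ A) =
      𝟙 (A ⊗ A) := by
    rw [associator_inv_naturality_middle_assoc, ← comp_whiskerRight, hunitr]
    monoidal
  rw [hRearr, hfrob2, comp_whiskerRight]
  simp only [Category.assoc] at hUnit ⊢
  slice_rhs 1 4 => rw [hUnit]
  rw [Category.id_comp, Category.assoc, hfrob1]
end
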